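/- Let G be the subgroup of GL_2(Z/8Z) consisting of matrices [[a,b],[0,a]] with a ∈ {1,5} ⊂ (Z/8Z)^× and b ∈ 2·Z/8Z. Then #G = 8, and if a subgroup K ≤ G contains a matrix [[a,2],[0,a]] with a ∈ {1,5} and the fixed-point subgroup of K acting on (Z/8Z)² contains no element of order 8, then K = G. -/

import Mathlib

set_option linter.unnecessarySeqFocus false

/-- The subgroup `G` of `GL₂(ℤ/8ℤ)` of matrices `[[a, b], [0, a]]` with `a ∈ {1, 5}` and
`b ∈ 2·ℤ/8ℤ`, as a set of `GL₂(ℤ/8ℤ)`. -/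
def Gset8 : Set (GL (Fin 2) (ZMod 8)) :=
  {M | M.1 1 0 = 0 ∧ M.1 1 1 = M.1 0 0 ∧ (M.1 0 0 = 1 ∨ M.1 0 0 = 5) ∧
    M.1 0 1 ∈ ({0, 2, 4, 6} : Set (ZMod 8))}

def mk8 (a b : ZMod 8) (h : a * a = 1) : GL (Fin 2) (ZMod 8) where
  val := !![a, b; 0, a]
  inv := !![a, -b; 0, a]
  val_inv := by
    rw [Matrix.mul_fin_two]; ext i j
    fin_cases i <;> fin_cases j <;> simp [h] <;> ring
  inv_val := by
    rw [Matrix.mul_fin_two]; ext i j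
    fin_cases i <;> fin_cases j <;> simp [h] <;> ring

lemma hone8 : (1 : ZMod 8) * 1 = 1 := by decide
lemma hfive8 : (5 : ZMod 8) * 5 = 1 := by decide

def G10 : GL (Fin 2) (ZMod 8) := mk8 1 0 hone8
def G12 : GL (Fin 2) (ZMod 8) := mk8 1 2 hone8
def G14 : GL (Fin 2) (ZMod 8) := mk8 1 4 hone8
def G16 : GL (Fin 2) (ZMod 8) := mk8 1 6 hone8
def G50 : GL (Fin 2) (ZMod 8) := mk8 5 0 hfive8
def G52 : GL (Fin 2) (ZMod 8) := mk8 5 2 hfive8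
def G54 : GL (Fin 2) (ZMod 8) := mk8 5 4 hfive8
def G56 : GL (Fin 2) (ZMod 8) := mk8 5 6 hfive8

lemma eq_mk8 (M : GL (Fin 2) (ZMod 8)) {a b : ZMod 8} (h : a * a = 1)
    (e00 : M.1 0 0 = a) (e01 : M.1 0 1 = b) (e10 : M.1 1 0 = 0) (e11 : M.1 1 1 = a) :
    M = mk8 a b h := by
  apply Units.ext
  show M.1 = !![a, b; 0, a]
  rw [Matrix.eta_fin_two M.1, e00, e01, e10, e11]

lemma mk8_mem (a b : ZMod 8) (h : a * a = 1) (ha : a = 1 ∨ a = 5)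
    (hb : b = 0 ∨ b = 2 ∨ b = 4 ∨ b = 6) : mk8 a b h ∈ Gset8 := by
  refine ⟨rfl, rfl, ha, ?_⟩
  simp only [Set.mem_insert_iff, Set.mem_singleton_iff]
  exact hb

lemma gset8_cases {M : GL (Fin 2) (ZMod 8)} (hM : M ∈ Gset8) :
    M = G10 ∨ M = G12 ∨ M = G14 ∨ M = G16 ∨ M = G50 ∨ M = G52 ∨ M = G54 ∨ M = G56 := by
  obtain ⟨e10, e11, e00, e01⟩ := hM
  simp only [Set.mem_insert_iff, Set.mem_singleton_iff] at e01
  rcases e00 with h1 | h1 <;> rcases e01 with h2 | h2 | h2 | h2 <;>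
    have := eq_mk8 M (by decide) h1 h2 e10 (e11.trans h1) <;>
    simp only [G10, G12, G14, G16, G50, G52, G54, G56] <;> tauto

def Gfin8 : Finset (GL (Fin 2) (ZMod 8)) := {G10, G12, G14, G16, G50, G52, G54, G56}

lemma gset8_eq_coe : Gset8 = ↑Gfin8 := by
  ext M
  constructor
  · intro hM
    simp only [Finset.mem_coe]
    rcases gset8_cases hM with h | h | h | h | h | h | h | h <;> subst h <;> decide
  · intro hM
    simp only [Finset.mem_coe, Gfin8, Finset.mem_insert, Finset.mem_singleton] at hM
    rcases hM with h | h | h | h | h | h | h | h <;> subst h <;>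
      exact mk8_mem _ _ _ (by tauto) (by tauto)

lemma ord8 (c : ZMod 8) : addOrderOf ![1, c] = 8 := by
  haveI : Fact (Nat.Prime 2) := ⟨Nat.prime_two⟩
  have h := addOrderOf_eq_prime_pow (p := 2) (n := 2) (x := ![1, c]) ?_ ?_
  · norm_num at h; exact h
  · intro h
    have h0 := congrFun h 0
    simp at h0
    revert h0; decide
  · funext i
    have h8 : (8 : ZMod 8) = 0 := by decide
    simp [nsmul_eq_mul, h8]

section Products
lemma p1 : G12 * G12 = G14 := by apply Units.ext; decide
lemma p2 : G14 * G12 = G16 := by apply Units.ext; decide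
lemma p3 : G16 * G12 = G10 := by apply Units.ext; decide
lemma p4 : G50 * G10 = G50 := by apply Units.ext; decide
lemma p5 : G50 * G12 = G52 := by apply Units.ext; decide
lemma p6 : G50 * G14 = G54 := by apply Units.ext; decide
lemma p7 : G50 * G16 = G56 := by apply Units.ext; decide
lemma p8 : G52 * G10 = G52 := by apply Units.ext; decide
lemma p9 : G52 * G12 = G54 := by apply Units.ext; decide
lemma p10 : G52 * G14 = G56 := by apply Units.ext; decide
lemma p11 : G52 * G16 = G50 := by apply Units.ext; decide
lemma p12 : G54 * G10 = G54 := by apply Units.ext; decide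
lemma p13 : G54 * G12 = G56 := by apply Units.ext; decide
lemma p14 : G54 * G14 = G50 := by apply Units.ext; decide
lemma p15 : G54 * G16 = G52 := by apply Units.ext; decide
lemma p16 : G56 * G10 = G56 := by apply Units.ext; decide
lemma p17 : G56 * G12 = G50 := by apply Units.ext; decide
lemma p18 : G56 * G14 = G52 := by apply Units.ext; decide
lemma p19 : G56 * G16 = G54 := by apply Units.ext; decide
-- powers of G52
lemma q1 : G52 * G52 = G14 := by apply Units.ext; decide
lemma q2 : G14 * G52 = G56 := by apply Units.ext; decide
lemma q3 : G56 * G52 = G10 := by apply Units.ext; decide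
lemma q4 : G16 * G14 = G12 := by apply Units.ext; decide
lemma q5 : G12 * G14 = G16 := by apply Units.ext; decide
lemma q6 : G50 * G52 = G12 := by apply Units.ext; decide
lemma q7 : G54 * G52 = G16 := by apply Units.ext; decide
end Products

/-- From `G12 ∈ K` and some `G5b ∈ K`, everything is in `K`. -/
lemma all_in_caseA {K : Subgroup (GL (Fin 2) (ZMod 8))} (h12 : G12 ∈ K)
    (h5 : G50 ∈ K ∨ G52 ∈ K ∨ G54 ∈ K ∨ G56 ∈ K) :
    G10 ∈ K ∧ G12 ∈ K ∧ G14 ∈ K ∧ G16 ∈ K ∧ G50 ∈ K ∧ G52 ∈ K ∧ G54 ∈ K ∧ G56 ∈ K := by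
  have h14 : G14 ∈ K := p1 ▸ K.mul_mem h12 h12
  have h16 : G16 ∈ K := p2 ▸ K.mul_mem h14 h12
  have h10 : G10 ∈ K := p3 ▸ K.mul_mem h16 h12
  rcases h5 with h | h | h | h
  · exact ⟨h10, h12, h14, h16, h, p5 ▸ K.mul_mem h h12, p6 ▸ K.mul_mem h h14,
      p7 ▸ K.mul_mem h h16⟩
  · exact ⟨h10, h12, h14, h16, p11 ▸ K.mul_mem h h16, h, p9 ▸ K.mul_mem h h12,
      p10 ▸ K.mul_mem h h14⟩
  · exact ⟨h10, h12, h14, h16, p14 ▸ K.mul_mem h h14, p15 ▸ K.mul_mem h h16, h,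
      p13 ▸ K.mul_mem h h12⟩
  · exact ⟨h10, h12, h14, h16, p17 ▸ K.mul_mem h h12, p18 ▸ K.mul_mem h h14,
      p19 ▸ K.mul_mem h h16, h⟩

/-- Let `G ≤ GL₂(ℤ/8ℤ)` consist of the matrices `[[a, b], [0, a]]` with
`a ∈ {1, 5} ⊆ (ℤ/8ℤ)ˣ` and `b ∈ 2·ℤ/8ℤ`.  Then `#G = 8`, and any subgroup `K ≤ G` containing
a matrix `[[a, 2], [0, a]]` with `a ∈ {1, 5}`, whose fixed points on `(ℤ/8ℤ)²` contain no
element of order `8`, equals `G`. -/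
theorem stmt_13 :
    Nat.card Gset8 = 8 ∧
    ∀ K : Subgroup (GL (Fin 2) (ZMod 8)), (K : Set _) ⊆ Gset8 →
      (∃ M ∈ K, M.1 1 0 = 0 ∧ M.1 0 1 = 2 ∧ M.1 1 1 = M.1 0 0 ∧
        (M.1 0 0 = 1 ∨ M.1 0 0 = 5)) →
      (∀ v : Fin 2 → ZMod 8, (∀ M ∈ K, M.1.mulVec v = v) → addOrderOf v ≠ 8) →
      (K : Set _) = Gset8 := by
  constructor
  · rw [Nat.card_coe_set_eq, gset8_eq_coe, Set.ncard_coe_finset]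
    decide
  · rintro K hKG ⟨M, hMK, e10, e01, e11, e00⟩ hfix
    -- It suffices to show all eight elements are in K.
    suffices hall : G10 ∈ K ∧ G12 ∈ K ∧ G14 ∈ K ∧ G16 ∈ K ∧ G50 ∈ K ∧ G52 ∈ K ∧
        G54 ∈ K ∧ G56 ∈ K by
      refine Set.Subset.antisymm hKG fun x hx => ?_
      obtain ⟨a1, a2, a3, a4, a5, a6, a7, a8⟩ := hall
      rcases gset8_cases hx with h | h | h | h | h | h | h | h <;> subst h <;> assumption
    rcases e00 with h1 | h1
    · -- M = G12
      have hM12 : M = G12 := eq_mk8 M hone8 h1 e01 e10 (e11.trans h1)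
      have h12 : G12 ∈ K := hM12 ▸ hMK
      by_cases h5ex : ∃ N ∈ K, N.1 0 0 = 5
      · obtain ⟨N, hNK, hN5⟩ := h5ex
        rcases gset8_cases (hKG hNK) with h | h | h | h | h | h | h | h <;> subst h <;>
          first
          | exact absurd hN5 (by decide)
          | exact all_in_caseA h12 (by tauto)
      · exfalso
        refine hfix ![1, 0] ?_ (ord8 0)
        intro N hN
        obtain ⟨f10, f11, f00, f01⟩ := hKG hN
        have f00' : N.1 0 0 = 1 := f00.resolve_right fun h => h5ex ⟨N, hN, h⟩
        funext i
        fin_cases i <;>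
          simp [Matrix.mulVec, dotProduct, Fin.sum_univ_two, f00', f10]
    · -- M = G52
      have hM52 : M = G52 := eq_mk8 M hfive8 h1 e01 e10 (e11.trans h1)
      have h52 : G52 ∈ K := hM52 ▸ hMK
      have h14 : G14 ∈ K := q1 ▸ K.mul_mem h52 h52
      have h56 : G56 ∈ K := q2 ▸ K.mul_mem h14 h52
      have h10 : G10 ∈ K := q3 ▸ K.mul_mem h56 h52
      by_cases hex : ∃ N ∈ K, N = G12 ∨ N = G16 ∨ N = G50 ∨ N = G54
      · obtain ⟨N, hNK, hc⟩ := hex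
        rcases hc with rfl | rfl | rfl | rfl
        · exact all_in_caseA hNK (Or.inr (Or.inl h52))
        · have h12 : G12 ∈ K := q4 ▸ K.mul_mem hNK h14
          exact all_in_caseA h12 (Or.inr (Or.inl h52))
        · have h12 : G12 ∈ K := q6 ▸ K.mul_mem hNK h52
          exact all_in_caseA h12 (Or.inr (Or.inl h52))
        · have h16 : G16 ∈ K := q7 ▸ K.mul_mem hNK h52
          have h12 : G12 ∈ K := q4 ▸ K.mul_mem h16 h14
          exact all_in_caseA h12 (Or.inr (Or.inl h52))
      · exfalso
        refine hfix ![1, 2] ?_ (ord8 2)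
        intro N hN
        rcases gset8_cases (hKG hN) with h | h | h | h | h | h | h | h <;> subst h <;>
          first
          | decide
          | exact absurd ⟨_, hN, by tauto⟩ hex
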